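/- arXiv:1610.05507 — 3 statements merged into one kernel-verified Lean document; each statement's English description precedes it below -/
import Mathlib

section
/- Let {V_k} and {w_k} be non-negative real sequences satisfying V_{k+1} ≤ a·V_k − b·w_k + c·∑_{j=k−k₀}^{k} w_j for all k ≥ 0, where a ∈ (0,1), b, c ≥ 0, k₀ ∈ ℕ, and w_k = 0 for k < 0. If (c/(1−a))·(1−a^{k₀+1})/a^{k₀} ≤ b, then V_k ≤ a^k · V_0 for all k ≥ 0. -/
/-!
The delayed terms `c · w_j` are absorbed into the Lyapunov function
`L_k = V_k + ∑_{i < k₀} ν_i w_{k-1-i}`, whose weight `ν_i = c (a^{i-k₀} - 1) / (1 - a)` is the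
total of the future contributions of `w_{k-1-i}` to the window sums, discounted by `a`. The weights
satisfy `a ν_i = c + ν_{i+1}` and `ν_{k₀} = 0`, so `L_{k+1} ≤ a L_k + (c + ν_0 - b) w_k`, and
the hypothesis on `b` says precisely `c + ν_0 ≤ b`. Hence `V_k ≤ L_k ≤ a^k L_0 = a^k V_0`.
-/

open Finset

lemma sum_Icc_sub_eq_sum_range {M : Type*} [AddCommMonoid M] (f : ℤ → M) (k : ℤ) (n : ℕ) :
    ∑ j ∈ Icc (k - n) k, f j = ∑ i ∈ range (n + 1), f (k - i) := by
  refine sum_nbij' (fun j ↦ (k - j).toNat) (fun i ↦ k - i) ?_ ?_ ?_ ?_ ?_ <;>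
    intro x hx <;> simp only [mem_Icc, mem_range] at hx ⊢
  all_goals first | omega | exact congrArg f (by omega)

lemma sum_range_eq_add_sum_range_succ_of_eq_zero {M : Type*} [AddCommMonoid M] {f : ℕ → M}
    {n : ℕ} (hf : f n = 0) : ∑ i ∈ range n, f i = f 0 + ∑ i ∈ range n, f (i + 1) := by
  rw [← add_zero (∑ i ∈ range n, f i), ← hf, ← sum_range_succ, sum_range_succ', add_comm]

noncomputable def delayWeight (a c : ℝ) (k₀ i : ℕ) : ℝ :=
  c * (a ^ ((i : ℤ) - k₀) - 1) / (1 - a)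

noncomputable def delayLyapunov (V w : ℤ → ℝ) (a c : ℝ) (k₀ : ℕ) (k : ℤ) : ℝ :=
  V k + ∑ i ∈ range k₀, delayWeight a c k₀ i * w (k - (i + 1 : ℕ))

section Weights

variable {a c : ℝ} {k₀ : ℕ}

lemma delayWeight_self : delayWeight a c k₀ k₀ = 0 := by
  simp [delayWeight]

lemma mul_delayWeight (ha : a ≠ 0) (ha1 : a ≠ 1) (i : ℕ) :
    a * delayWeight a c k₀ i = c + delayWeight a c k₀ (i + 1) := by
  have h1a : 1 - a ≠ 0 := sub_ne_zero.mpr (Ne.symm ha1)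
  simp only [delayWeight, Nat.cast_add, Nat.cast_one, add_sub_right_comm _ (1 : ℤ),
    zpow_add_one₀ ha]
  field_simp
  ring

lemma delayWeight_nonneg (ha : 0 < a) (ha1 : a < 1) (hc : 0 ≤ c) {i : ℕ} (hi : i ≤ k₀) :
    0 ≤ delayWeight a c k₀ i := by
  have : 1 ≤ a ^ ((i : ℤ) - k₀) := one_le_zpow_of_nonpos₀ ha ha1.le (by omega)
  unfold delayWeight
  exact div_nonneg (mul_nonneg hc (by linarith)) (by linarith)

lemma add_delayWeight_zero (ha : a ≠ 0) (ha1 : a ≠ 1) :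
    c + delayWeight a c k₀ 0 = c / (1 - a) * ((1 - a ^ (k₀ + 1)) / a ^ k₀) := by
  have h1a : 1 - a ≠ 0 := sub_ne_zero.mpr (Ne.symm ha1)
  simp only [delayWeight, Nat.cast_zero, zero_sub, zpow_neg, zpow_natCast]
  field_simp
  ring

end Weights

section Lyapunov

variable {V w : ℤ → ℝ} {a b c : ℝ} {k₀ : ℕ}

lemma le_delayLyapunov (ha : 0 < a) (ha1 : a < 1) (hc : 0 ≤ c) (hw : ∀ k, 0 ≤ w k) (k : ℤ) :
    V k ≤ delayLyapunov V w a c k₀ k :=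
  le_add_of_nonneg_right <| sum_nonneg fun _ hi ↦
    mul_nonneg (delayWeight_nonneg ha ha1 hc (mem_range.mp hi).le) (hw _)

lemma delayLyapunov_zero (hw0 : ∀ k : ℤ, k < 0 → w k = 0) :
    delayLyapunov V w a c k₀ 0 = V 0 := by
  rw [delayLyapunov, sum_eq_zero fun _ _ ↦ by rw [hw0 _ (by omega), mul_zero], add_zero]

lemma delayLyapunov_succ_le (ha : a ≠ 0) (ha1 : a ≠ 1) {k : ℤ} (hwk : 0 ≤ w k)
    (hrec : V (k + 1) ≤ a * V k - b * w k + c * ∑ j ∈ Icc (k - k₀) k, w j)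
    (hb : c + delayWeight a c k₀ 0 ≤ b) :
    delayLyapunov V w a c k₀ (k + 1) ≤ a * delayLyapunov V w a c k₀ k := by
  set ν := delayWeight a c k₀
  set S := ∑ i ∈ range k₀, w (k - (i + 1 : ℕ))
  set U := ∑ i ∈ range k₀, ν (i + 1) * w (k - (i + 1 : ℕ))
  have hwindow : ∑ j ∈ Icc (k - k₀) k, w j = w k + S := by
    rw [sum_Icc_sub_eq_sum_range, sum_range_succ', Nat.cast_zero, sub_zero, add_comm]
  have hnext : delayLyapunov V w a c k₀ (k + 1) = V (k + 1) + (ν 0 * w k + U) := by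
    have hshift := sum_range_eq_add_sum_range_succ_of_eq_zero
      (f := fun i : ℕ ↦ ν i * w (k - i)) (n := k₀) (by simp [ν, delayWeight_self])
    simp only [Nat.cast_zero, sub_zero] at hshift
    rw [delayLyapunov, ← hshift]
    congr 1
    refine sum_congr rfl fun i _ ↦ ?_
    rw [show k + 1 - ((i + 1 : ℕ) : ℤ) = k - i by push_cast; ring]
  have hcur : a * delayLyapunov V w a c k₀ k = a * V k + (c * S + U) := by
    simp only [delayLyapunov, mul_add, mul_sum, ← mul_assoc, mul_delayWeight ha ha1, add_mul,
      sum_add_distrib, S, U, ν]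
  have hexcess : (c + ν 0 - b) * w k ≤ 0 := mul_nonpos_of_nonpos_of_nonneg (by linarith) hwk
  rw [hwindow] at hrec
  rw [hnext, hcur]
  nlinarith

end Lyapunov

theorem sequence_lemma_general (V w : ℤ → ℝ) (a b c : ℝ) (k₀ : ℕ)
    (hw : ∀ k, 0 ≤ w k)
    (hw0 : ∀ k : ℤ, k < 0 → w k = 0)
    (ha : 0 < a) (ha1 : a < 1) (hc : 0 ≤ c)
    (hrec : ∀ k : ℕ, V (k + 1) ≤ a * V k - b * w k +
      c * ∑ j ∈ Finset.Icc ((k : ℤ) - k₀) (k : ℤ), w j)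
    (hcond : c / (1 - a) * ((1 - a ^ (k₀ + 1)) / a ^ k₀) ≤ b) :
    ∀ k : ℕ, V k ≤ a ^ k * V 0 := by
  intro k
  have hb : c + delayWeight a c k₀ 0 ≤ b := by
    rwa [add_delayWeight_zero ha.ne' ha1.ne]
  have hstep : ∀ n < k, delayLyapunov V w a c k₀ ((n + 1 : ℕ) : ℤ) ≤
      a * delayLyapunov V w a c k₀ (n : ℕ) := fun n _ ↦ by
    push_cast
    exact delayLyapunov_succ_le ha.ne' ha1.ne (hw n) (hrec n) hb
  calc V k ≤ delayLyapunov V w a c k₀ k := le_delayLyapunov ha ha1 hc hw k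
    _ ≤ a ^ k * delayLyapunov V w a c k₀ (0 : ℕ) :=
      le_geom (u := fun n : ℕ ↦ delayLyapunov V w a c k₀ n) ha.le k hstep
    _ = a ^ k * V 0 := by rw [Nat.cast_zero, delayLyapunov_zero hw0]

theorem sequence_lemma (V w : ℤ → ℝ) (a b c : ℝ) (k₀ : ℕ)
    (hV : ∀ k, 0 ≤ V k) (hw : ∀ k, 0 ≤ w k)
    (hw0 : ∀ k : ℤ, k < 0 → w k = 0)
    (ha : 0 < a) (ha1 : a < 1) (hb : 0 ≤ b) (hc : 0 ≤ c)
    (hrec : ∀ k : ℕ, V (k + 1) ≤ a * V k - b * w k +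
      c * ∑ j ∈ Finset.Icc ((k : ℤ) - k₀) (k : ℤ), w j)
    (hcond : c / (1 - a) * ((1 - a ^ (k₀ + 1)) / a ^ k₀) ≤ b) :
    ∀ k : ℕ, V k ≤ a ^ k * V 0 :=
  sequence_lemma_general V w a b c k₀ hw hw0 ha ha1 hc hrec hcond
end

section
/- Suppose assumptions A1–A4 hold (F = ∑ f_n is μ-strongly convex, each f_n convex with L_n-Lipschitz gradient, h convex and subdifferentiable, delays bounded by τ̄), and let x* minimize F + h. Then the iterates of the proximal incremental aggregated gradient method x_{k+1} = argmin_x {⟨g_k, x − x_k⟩ + (1/(2α))‖x − x_k‖² + h(x)} with g_k = ∑_n ∇f_n(x_{k−τ_k^n}) satisfy ‖x_{k+1} − x*‖² ≤ (1/(μα+1))‖x_k − x*‖² − (1/(μα+1))‖x_{k+1} − x_k‖² + (α(τ̄+1)L/(μα+1))·∑_{j=k−τ̄}^{k} ‖x_{j+1} − x_j‖², where L = ∑_n L_n. -/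
/-!
The prox step minimises a `1/α`-strongly convex model, so comparing its value at `x_{k+1}` and at
`x*` gains `‖x* - x_{k+1}‖² / (2α)`; dually, `F + h` is `μ`-strongly convex with minimiser `x*`,
so it grows at least like `μ/2 ‖x_{k+1} - x*‖²`. The two are linked through the aggregated delayed
gradient: convexity of `fₙ` at `x*` and the descent lemma at the delayed point `x_{k-τ}` give
`fₙ(x_{k+1}) ≤ fₙ(x*) + ⟪∇fₙ(x_{k-τ}), x_{k+1} - x*⟫ + Lₙ/2 ‖x_{k+1} - x_{k-τ}‖²`, and the last
term is at most `(τ̄ + 1) ∑_{j=k-τ̄}^{k} ‖x_{j+1} - x_j‖²` by telescoping and Cauchy–Schwarz.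
-/

open RealInnerProductSpace

section StrongConvexity

variable {E : Type*} [NormedAddCommGroup E] [InnerProductSpace ℝ E]

lemma StrongConvexOn.add_convexOn {s : Set E} {m : ℝ} {f g : E → ℝ}
    (hf : StrongConvexOn s m f) (hg : ConvexOn ℝ s g) : StrongConvexOn s m (f + g) := by
  simpa [StrongConvexOn] using hf.add hg.uniformConvexOn_zero

lemma StrongConvexOn.add_sq_le_of_isMinOn {s : Set E} {m : ℝ} {f : E → ℝ} {u z : E}
    (hf : StrongConvexOn s m f) (hmin : IsMinOn f s u) (hu : u ∈ s) (hz : z ∈ s) :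
    f u + m / 2 * ‖z - u‖ ^ 2 ≤ f z := by
  -- compare `f u` with `f (t • z + (1 - t) • u)`, then let `t → 0`
  have hnear : ∀ t ∈ Set.Ioo (0 : ℝ) 1, f u + (1 - t) * (m / 2 * ‖z - u‖ ^ 2) ≤ f z := by
    rintro t ⟨ht0, ht1⟩
    have hconv := hf.2 hz hu ht0.le (sub_nonneg.2 ht1.le) (add_sub_cancel t 1)
    have hmin' : f u ≤ f (t • z + (1 - t) • u) :=
      hmin (hf.1 hz hu ht0.le (sub_nonneg.2 ht1.le) (add_sub_cancel t 1))
    simp only [smul_eq_mul] at hconv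
    have : t * (f u + (1 - t) * (m / 2 * ‖z - u‖ ^ 2)) ≤ t * f z := by nlinarith
    exact le_of_mul_le_mul_left this ht0
  have hlim : Filter.Tendsto (fun t : ℝ => f u + (1 - t) * (m / 2 * ‖z - u‖ ^ 2))
      (nhdsWithin 0 (Set.Ioo 0 1)) (nhds (f u + m / 2 * ‖z - u‖ ^ 2)) := by
    refine Filter.Tendsto.mono_left ?_ nhdsWithin_le_nhds
    exact Continuous.tendsto' (by fun_prop) 0 _ (by simp)
  have : (nhdsWithin (0 : ℝ) (Set.Ioo 0 1)).NeBot :=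
    left_nhdsWithin_Ioo_neBot zero_lt_one
  exact le_of_tendsto hlim (eventually_nhdsWithin_of_forall hnear)

lemma strongConvexOn_univ_of_add_inner_le {f : E → ℝ} {g : E → E} {m : ℝ}
    (hf : ∀ u v, f v + ⟪g v, u - v⟫ + m / 2 * ‖u - v‖ ^ 2 ≤ f u) :
    StrongConvexOn Set.univ m f := by
  refine ⟨convex_univ, fun u _ v _ a b ha hb hab => ?_⟩
  obtain rfl : b = 1 - a := by linarith
  set w := a • u + (1 - a) • v
  have hu : u - w = (1 - a) • (u - v) := by simp only [w]; module
  have hv : v - w = -(a • (u - v)) := by simp only [w]; module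
  have h1 := hf u w
  have h2 := hf v w
  rw [hu, inner_smul_right, norm_smul, Real.norm_of_nonneg hb] at h1
  rw [hv, inner_neg_right, inner_smul_right, norm_neg, norm_smul, Real.norm_of_nonneg ha] at h2
  have := add_le_add (mul_le_mul_of_nonneg_left h1 ha) (mul_le_mul_of_nonneg_left h2 hb)
  simp only [smul_eq_mul]
  linarith

lemma strongConvexOn_inner_add_mul_norm_sq (G a : E) (c : ℝ) :
    StrongConvexOn Set.univ (2 * c) fun z => ⟪G, z - a⟫ + c * ‖z - a‖ ^ 2 := by
  refine strongConvexOn_univ_of_add_inner_le (g := fun v => G + (2 * c) • (v - a)) fun u v => ?_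
  apply le_of_eq
  have : u - a = (v - a) + (u - v) := by abel
  rw [this, norm_add_sq_real, inner_add_right, inner_add_left, real_inner_smul_left]
  ring

end StrongConvexity

section Gradient

variable {E : Type*} [NormedAddCommGroup E] [InnerProductSpace ℝ E] [CompleteSpace E]

lemma HasGradientAt.hasDerivAt_comp_lineMap {f : E → ℝ} {g a b : E} {t : ℝ}
    (hf : HasGradientAt f g (AffineMap.lineMap a b t)) :
    HasDerivAt (fun s => f (AffineMap.lineMap a b s)) ⟪g, b - a⟫ t := by
  have := hf.hasFDerivAt.comp_hasDerivAt t AffineMap.hasDerivAt_lineMap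
  simpa [Function.comp_def, InnerProductSpace.toDual_apply_apply] using this

lemma ConvexOn.add_inner_le_of_hasGradientAt {f : E → ℝ} {g u : E}
    (hf : ConvexOn ℝ Set.univ f) (hg : HasGradientAt f g u) (v : E) :
    f u + ⟪g, v - u⟫ ≤ f v := by
  have hline := (hf.comp_affineMap (AffineMap.lineMap u v)).le_slope_of_hasDerivAt
    (Set.mem_univ 0) (Set.mem_univ 1) zero_lt_one
    (HasGradientAt.hasDerivAt_comp_lineMap (by simpa using hg))
  simp only [slope_def_field, Function.comp_apply, AffineMap.lineMap_apply_one,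
    AffineMap.lineMap_apply_zero, sub_zero, div_one] at hline
  linarith

lemma le_add_inner_add_sq_of_gradient_lipschitz {f : E → ℝ} {g : E → E} {L : ℝ}
    (hg : ∀ z, HasGradientAt f (g z) z) (hL : ∀ u v, ‖g u - g v‖ ≤ L * ‖u - v‖) (a b : E) :
    f b ≤ f a + ⟪g a, b - a⟫ + L / 2 * ‖b - a‖ ^ 2 := by
  set φ : ℝ → ℝ := fun t => f (AffineMap.lineMap a b t) - t * ⟪g a, b - a⟫ -
    L / 2 * t ^ 2 * ‖b - a‖ ^ 2
  have hφ : ∀ t, HasDerivAt φ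
      (⟪g (AffineMap.lineMap a b t), b - a⟫ - ⟪g a, b - a⟫ - L * t * ‖b - a‖ ^ 2) t := by
    intro t
    have := (((hg _).hasDerivAt_comp_lineMap (a := a) (b := b) (t := t)).sub
      ((hasDerivAt_id t).mul_const ⟪g a, b - a⟫)).sub
      (((hasDerivAt_pow 2 t).const_mul (L / 2)).mul_const (‖b - a‖ ^ 2))
    exact this.congr_deriv
      (by simp only [one_mul, Nat.cast_ofNat, Nat.add_one_sub_one, pow_one]; ring)
  have hanti : AntitoneOn φ (Set.Ici 0) := by
    refine antitoneOn_of_hasDerivWithinAt_nonpos (convex_Ici 0)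
      (fun t _ => (hφ t).continuousAt.continuousWithinAt) (fun t _ => (hφ t).hasDerivWithinAt) ?_
    intro t ht
    rw [interior_Ici, Set.mem_Ioi] at ht
    rw [sub_nonpos]
    have hdist : ‖AffineMap.lineMap a b t - a‖ = t * ‖b - a‖ := by
      rw [AffineMap.lineMap_apply_module', add_sub_cancel_right, norm_smul,
        Real.norm_of_nonneg ht.le]
    calc ⟪g (AffineMap.lineMap a b t), b - a⟫ - ⟪g a, b - a⟫
        = ⟪g (AffineMap.lineMap a b t) - g a, b - a⟫ := (inner_sub_left _ _ _).symm
      _ ≤ ‖g (AffineMap.lineMap a b t) - g a‖ * ‖b - a‖ := real_inner_le_norm _ _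
      _ ≤ L * (t * ‖b - a‖) * ‖b - a‖ := by
          rw [← hdist]; exact mul_le_mul_of_nonneg_right (hL _ _) (norm_nonneg _)
      _ = L * t * ‖b - a‖ ^ 2 := by ring
  have := hanti (Set.mem_Ici.2 le_rfl) (Set.mem_Ici.2 zero_le_one) zero_le_one
  simp only [φ, AffineMap.lineMap_apply_zero, AffineMap.lineMap_apply_one] at this
  linarith

lemma ConvexOn.le_add_inner_add_sq_of_gradient_lipschitz {f : E → ℝ} {g : E → E} {L : ℝ}
    (hf : ConvexOn ℝ Set.univ f) (hg : ∀ z, HasGradientAt f (g z) z)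
    (hL : ∀ u v, ‖g u - g v‖ ≤ L * ‖u - v‖) (y b z : E) :
    f b ≤ f z + ⟪g y, b - z⟫ + L / 2 * ‖b - y‖ ^ 2 := by
  have hdescent := _root_.le_add_inner_add_sq_of_gradient_lipschitz hg hL y b
  have hsupport := hf.add_inner_le_of_hasGradientAt (hg y) z
  have hsplit : ⟪g y, b - z⟫ = ⟪g y, b - y⟫ - ⟪g y, z - y⟫ := by
    rw [← inner_sub_right, sub_sub_sub_cancel_right]
  linarith

lemma sum_le_sum_add_inner_add_sq_of_gradient_lipschitz {ι : Type*} (s : Finset ι)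
    {f : ι → E → ℝ} {g : ι → E → E} {L : ι → ℝ} (hf : ∀ n, ConvexOn ℝ Set.univ (f n))
    (hg : ∀ n z, HasGradientAt (f n) (g n z) z) (hL : ∀ n u v, ‖g n u - g n v‖ ≤ L n * ‖u - v‖)
    (y : ι → E) (b z : E) :
    ∑ n ∈ s, f n b ≤ ∑ n ∈ s, f n z + ⟪∑ n ∈ s, g n (y n), b - z⟫ +
      ∑ n ∈ s, L n / 2 * ‖b - y n‖ ^ 2 := by
  rw [sum_inner, ← Finset.sum_add_distrib, ← Finset.sum_add_distrib]
  exact Finset.sum_le_sum fun n _ =>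
    (hf n).le_add_inner_add_sq_of_gradient_lipschitz (hg n) (hL n) _ _ _

end Gradient

section Delays

variable {E : Type*} [NormedAddCommGroup E]

lemma nonneg_of_norm_sub_le_mul_norm_sub [Nontrivial E] {F : Type*} [SeminormedAddCommGroup F]
    {φ : E → F} {K : ℝ} (h : ∀ u v, ‖φ u - φ v‖ ≤ K * ‖u - v‖) : 0 ≤ K := by
  obtain ⟨u, v, huv⟩ := exists_pair_ne E
  exact nonneg_of_mul_nonneg_left ((norm_nonneg _).trans (h u v))
    (norm_pos_iff.2 (sub_ne_zero.2 huv))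

lemma Finset.sum_Icc_sub_eq_sub {M : Type*} [AddCommGroup M] (x : ℤ → M) (k : ℤ) (n : ℕ) :
    ∑ j ∈ Finset.Icc (k - n) k, (x (j + 1) - x j) = x (k + 1) - x (k - n) := by
  induction n with
  | zero => simp
  | succ n ih =>
    have hins : Finset.Icc (k - (n + 1 : ℕ)) k =
        insert (k - (n + 1 : ℕ)) (Finset.Icc (k - n) k) := by
      ext j; simp only [Finset.mem_Icc, Finset.mem_insert]; omega
    rw [hins, Finset.sum_insert (by simp only [Finset.mem_Icc]; omega), ih,
      show k - (n + 1 : ℕ) + 1 = k - n by push_cast; ring]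
    abel

lemma norm_sub_sq_le_of_delay (x : ℤ → E) (k : ℤ) {τ τbar : ℕ} (hτ : τ ≤ τbar) :
    ‖x (k + 1) - x (k - τ)‖ ^ 2 ≤
      (τbar + 1) * ∑ j ∈ Finset.Icc (k - τbar) k, ‖x (j + 1) - x j‖ ^ 2 := by
  have hcard : ((Finset.Icc (k - τ) k).card : ℝ) ≤ τbar + 1 := by
    rw [Int.card_Icc, show k + 1 - (k - τ) = ((τ + 1 : ℕ) : ℤ) by push_cast; ring,
      Int.toNat_natCast]
    exact_mod_cast Nat.succ_le_succ hτ
  have hsub : Finset.Icc (k - τ) k ⊆ Finset.Icc (k - τbar) k :=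
    Finset.Icc_subset_Icc (by omega) le_rfl
  calc ‖x (k + 1) - x (k - τ)‖ ^ 2
      = ‖∑ j ∈ Finset.Icc (k - τ) k, (x (j + 1) - x j)‖ ^ 2 := by
        rw [Finset.sum_Icc_sub_eq_sub]
    _ ≤ (∑ j ∈ Finset.Icc (k - τ) k, ‖x (j + 1) - x j‖) ^ 2 := by
        gcongr; exact norm_sum_le _ _
    _ ≤ (Finset.Icc (k - τ) k).card * ∑ j ∈ Finset.Icc (k - τ) k, ‖x (j + 1) - x j‖ ^ 2 :=
        sq_sum_le_card_mul_sum_sq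
    _ ≤ (τbar + 1) * ∑ j ∈ Finset.Icc (k - τbar) k, ‖x (j + 1) - x j‖ ^ 2 := by
        gcongr

lemma sum_mul_norm_sub_sq_le_of_delay {ι : Type*} (s : Finset ι) {L : ι → ℝ} (hL : ∀ n, 0 ≤ L n)
    (x : ℤ → E) (k : ℤ) {τ : ι → ℕ} {τbar : ℕ} (hτ : ∀ n, τ n ≤ τbar) :
    ∑ n ∈ s, L n / 2 * ‖x (k + 1) - x (k - τ n)‖ ^ 2 ≤
      (∑ n ∈ s, L n) / 2 * ((τbar + 1) * ∑ j ∈ Finset.Icc (k - τbar) k, ‖x (j + 1) - x j‖ ^ 2) := by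
  rw [Finset.sum_div, Finset.sum_mul]
  exact Finset.sum_le_sum fun n _ =>
    mul_le_mul_of_nonneg_left (norm_sub_sq_le_of_delay x k (hτ n)) (by linarith [hL n])

end Delays

theorem piag_one_step_inequality_general {d N : ℕ}
    (f : Fin N → EuclideanSpace ℝ (Fin d) → ℝ)
    (g : Fin N → EuclideanSpace ℝ (Fin d) → EuclideanSpace ℝ (Fin d))
    (L : Fin N → ℝ) (μ α : ℝ) (τbar : ℕ)
    (h : EuclideanSpace ℝ (Fin d) → ℝ)
    (x : ℤ → EuclideanSpace ℝ (Fin d))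
    (τ : ℤ → Fin N → ℕ)
    (xstar : EuclideanSpace ℝ (Fin d))
    (hμ : 0 < μ) (hα : 0 < α)
    -- A2: each fₙ convex with Lₙ-Lipschitz gradient
    (hfconv : ∀ n, ConvexOn ℝ Set.univ (f n))
    (hgrad : ∀ n z, HasGradientAt (f n) (g n z) z)
    (hLip : ∀ n u v, ‖g n u - g n v‖ ≤ L n * ‖u - v‖)
    -- A1: F = ∑ fₙ is μ-strongly convex
    (hsc : ∀ u v, (∑ n, f n u) ≥ (∑ n, f n v) + ⟪∑ n, g n v, u - v⟫ +
      μ / 2 * ‖u - v‖ ^ 2)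
    -- A3: h convex (hence subdifferentiable on its domain)
    (hhconv : ConvexOn ℝ Set.univ h)
    -- A4: bounded delays
    (hτ : ∀ k n, τ k n ≤ τbar)
    -- update rule: x_{k+1} minimizes the proximal model with aggregated gradient g_k
    (hupdate : ∀ k : ℤ, 0 ≤ k → ∀ z,
      ⟪∑ n, g n (x (k - τ k n)), x (k + 1) - x k⟫ +
        1 / (2 * α) * ‖x (k + 1) - x k‖ ^ 2 + h (x (k + 1)) ≤
      ⟪∑ n, g n (x (k - τ k n)), z - x k⟫ +
        1 / (2 * α) * ‖z - x k‖ ^ 2 + h z)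
    -- x* minimizes F + h
    (hstar : ∀ z, (∑ n, f n xstar) + h xstar ≤ (∑ n, f n z) + h z) :
    ∀ k : ℤ, 0 ≤ k →
      ‖x (k + 1) - xstar‖ ^ 2 ≤
        1 / (μ * α + 1) * ‖x k - xstar‖ ^ 2
        - 1 / (μ * α + 1) * ‖x (k + 1) - x k‖ ^ 2
        + α * (τbar + 1) * (∑ n, L n) / (μ * α + 1) *
            ∑ j ∈ Finset.Icc (k - τbar) k, ‖x (j + 1) - x j‖ ^ 2 := by
  intro k hk
  -- `0 ≤ L n` can only be read off `hLip` in a nontrivial space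
  rcases subsingleton_or_nontrivial (EuclideanSpace ℝ (Fin d)) with hE | hE
  · simp [Subsingleton.eq_zero]
  set G := ∑ n, g n (x (k - τ k n))
  set L' := ∑ n, L n
  set S := ∑ j ∈ Finset.Icc (k - τbar) k, ‖x (j + 1) - x j‖ ^ 2
  have hprox := ((strongConvexOn_inner_add_mul_norm_sq G (x k) (1 / (2 * α))).add_convexOn
    hhconv).add_sq_le_of_isMinOn (fun z _ => hupdate k hk z) (Set.mem_univ _) (Set.mem_univ xstar)
  have hgrowth := ((strongConvexOn_univ_of_add_inner_le hsc).add_convexOn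
    hhconv).add_sq_le_of_isMinOn (fun z _ => hstar z) (Set.mem_univ _) (Set.mem_univ (x (k + 1)))
  have hlin := sum_le_sum_add_inner_add_sq_of_gradient_lipschitz Finset.univ hfconv hgrad hLip
    (fun n => x (k - τ k n)) (x (k + 1)) xstar
  have hdelay := sum_mul_norm_sub_sq_le_of_delay Finset.univ
    (fun n => nonneg_of_norm_sub_le_mul_norm_sub (hLip n)) x k (hτ k)
  have hsplit : ⟪G, x (k + 1) - x k⟫ - ⟪G, xstar - x k⟫ = ⟪G, x (k + 1) - xstar⟫ := by
    rw [← inner_sub_right, sub_sub_sub_cancel_right]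
  simp only [Pi.add_apply, norm_sub_rev xstar] at hprox hgrowth
  have hkey : μ / 2 * ‖x (k + 1) - xstar‖ ^ 2 ≤ L' / 2 * ((τbar + 1) * S) +
      1 / (2 * α) * (‖x k - xstar‖ ^ 2 - ‖x (k + 1) - x k‖ ^ 2 - ‖x (k + 1) - xstar‖ ^ 2) := by
    linarith
  have hscaled := mul_le_mul_of_nonneg_left hkey (by positivity : 0 ≤ 2 * α)
  field_simp at hscaled
  have hden : 0 < μ * α + 1 := by positivity
  field_simp
  linarith

/-- One-step contraction inequality for the asynchronous proximal incremental
aggregated gradient (PIAG) method under assumptions A1--A4. -/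
theorem piag_one_step_inequality {d N : ℕ}
    (f : Fin N → EuclideanSpace ℝ (Fin d) → ℝ)
    (g : Fin N → EuclideanSpace ℝ (Fin d) → EuclideanSpace ℝ (Fin d))
    (L : Fin N → ℝ) (μ α : ℝ) (τbar : ℕ)
    (h : EuclideanSpace ℝ (Fin d) → ℝ)
    (x : ℤ → EuclideanSpace ℝ (Fin d))
    (τ : ℤ → Fin N → ℕ)
    (xstar : EuclideanSpace ℝ (Fin d))
    (hμ : 0 < μ) (hα : 0 < α)
    -- A2: each fₙ convex with Lₙ-Lipschitz gradient
    (hfconv : ∀ n, ConvexOn ℝ Set.univ (f n))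
    (hgrad : ∀ n z, HasGradientAt (f n) (g n z) z)
    (hLip : ∀ n u v, ‖g n u - g n v‖ ≤ L n * ‖u - v‖)
    -- A1: F = ∑ fₙ is μ-strongly convex
    (hsc : ∀ u v, (∑ n, f n u) ≥ (∑ n, f n v) + ⟪∑ n, g n v, u - v⟫ +
      μ / 2 * ‖u - v‖ ^ 2)
    -- A3: h convex (hence subdifferentiable on its domain)
    (hhconv : ConvexOn ℝ Set.univ h)
    -- A4: bounded delays
    (hτ : ∀ k n, τ k n ≤ τbar)
    -- iterates fixed before time 0
    (hpast : ∀ j : ℤ, j < 0 → x (j + 1) = x j)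
    -- update rule: x_{k+1} minimizes the proximal model with aggregated gradient g_k
    (hupdate : ∀ k : ℤ, 0 ≤ k → ∀ z,
      ⟪∑ n, g n (x (k - τ k n)), x (k + 1) - x k⟫ +
        1 / (2 * α) * ‖x (k + 1) - x k‖ ^ 2 + h (x (k + 1)) ≤
      ⟪∑ n, g n (x (k - τ k n)), z - x k⟫ +
        1 / (2 * α) * ‖z - x k‖ ^ 2 + h z)
    -- x* minimizes F + h
    (hstar : ∀ z, (∑ n, f n xstar) + h xstar ≤ (∑ n, f n z) + h z) :
    ∀ k : ℤ, 0 ≤ k →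
      ‖x (k + 1) - xstar‖ ^ 2 ≤
        1 / (μ * α + 1) * ‖x k - xstar‖ ^ 2
        - 1 / (μ * α + 1) * ‖x (k + 1) - x k‖ ^ 2
        + α * (τbar + 1) * (∑ n, L n) / (μ * α + 1) *
            ∑ j ∈ Finset.Icc (k - τbar) k, ‖x (j + 1) - x j‖ ^ 2 :=
  piag_one_step_inequality_general f g L μ α τbar h x τ xstar hμ hα hfconv hgrad hLip hsc hhconv hτ
    hupdate hstar
end

section
/- Let a = 1/(μα+1) ∈ (0,1), b = a, c = α(τ̄+1)L/(μα+1), with μ, L > 0, τ̄ ∈ ℕ, α > 0. Then the condition (c/(1−a))·(1−a^{τ̄+1})/a^{τ̄} ≤ b is implied by the step-size bound α ≤ ((1 + (μ/L)·1/(τ̄+1))^{1/(τ̄+1)} − 1)/μ. -/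
/-!
With `s = μα + 1` and `n = τ̄ + 1`, the factor `c / (1 - a)` simplifies to `n L / μ` and
`(1 - a^n) / a^(n-1)` to `(s^n - 1) / s`, so the condition reads `n L (s^n - 1) ≤ μ`, i.e.
`s^n ≤ 1 + μ / (L n)`. The step-size bound is exactly `s ≤ (1 + μ / (L n))^(1/n)`.
-/

theorem one_sub_one_div_pow_succ_div_one_div_pow {K : Type*} [Field K] {s : K} (hs : s ≠ 0)
    (m : ℕ) : (1 - (1 / s) ^ (m + 1)) / (1 / s) ^ m = (s ^ (m + 1) - 1) / s := by
  rw [one_div, inv_pow, inv_pow, div_inv_eq_mul, pow_succ]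
  field_simp

theorem mul_div_mul_add_one_div_one_sub_one_div {K : Type*} [Field K] {μ x : K} (y : K)
    (hμ : μ ≠ 0) (hx : x ≠ 0) (hs : μ * x + 1 ≠ 0) :
    x * y / (μ * x + 1) / (1 - 1 / (μ * x + 1)) = y / μ := by
  rw [one_sub_div hs, add_sub_cancel_right, div_div_div_cancel_right₀ hs]
  field_simp

theorem pow_le_of_le_rpow_inv_natCast {s X : ℝ} {n : ℕ} (hs : 0 ≤ s) (hX : 0 ≤ X) (hn : n ≠ 0)
    (h : s ≤ X ^ (n⁻¹ : ℝ)) : s ^ n ≤ X :=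
  Real.rpow_inv_natCast_pow hX hn ▸ pow_le_pow_left₀ hs h n

theorem stepsize_implies_lemma_condition
    (μ L α : ℝ) (τbar : ℕ) (hμ : 0 < μ) (hL : 0 < L) (hα : 0 < α)
    (hstep : α ≤ ((1 + μ / L * (1 / (τbar + 1))) ^ ((1 : ℝ) / (τbar + 1)) - 1) / μ) :
    let a : ℝ := 1 / (μ * α + 1)
    let b : ℝ := a
    let c : ℝ := α * (τbar + 1) * L / (μ * α + 1)
    c / (1 - a) * ((1 - a ^ (τbar + 1)) / a ^ τbar) ≤ b := by
  intro a b c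
  set s := μ * α + 1
  set n : ℝ := τbar + 1
  have hs : 0 < s := by positivity
  have hn : 0 < n := by positivity
  have hpow : s ^ (τbar + 1) ≤ 1 + μ / L * (1 / n) := by
    refine pow_le_of_le_rpow_inv_natCast hs.le (by positivity) τbar.succ_ne_zero ?_
    rw [le_div_iff₀ hμ] at hstep
    push_cast
    rw [← one_div]
    linarith
  have hc : α * n * L / s / (1 - 1 / s) = n * L / μ := by
    simpa only [mul_assoc] using
      mul_div_mul_add_one_div_one_sub_one_div (n * L) hμ.ne' hα.ne' hs.ne'
  show α * n * L / s / (1 - 1 / s) * ((1 - (1 / s) ^ (τbar + 1)) / (1 / s) ^ τbar) ≤ 1 / s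
  rw [hc, one_sub_one_div_pow_succ_div_one_div_pow hs.ne', ← mul_div_assoc]
  refine div_le_div_of_nonneg_right ?_ hs.le
  calc n * L / μ * (s ^ (τbar + 1) - 1) ≤ n * L / μ * (μ / L * (1 / n)) := by gcongr; linarith
    _ = 1 := by field_simp
end
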